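/- For all x, y ∈ ℂ one has θ₄(x|τ/2)·θ₄(y|τ/2) − θ₃(x|τ/2)·θ₃(y|τ/2) = −2·θ₂(x+y|τ)·θ₂(x−y|τ). -/

import Mathlib

/-!
Write `θ₃(z|τ) = ∑ₙ q(n, z)` with `q(n, z) = exp(πiτn² + 2πizn)` (Mathlib's `jacobiTheta₂_term`).
The shift `z ↦ z + ½`, which turns `θ₃` into `θ₄`, multiplies `q(n, z)` by `(-1)ⁿ`, so the double
series of the left-hand side has summand `((-1)^(m+n) - 1) q(m, x) q(n, y)` at `τ/2`. This vanishes
unless `m + n` is odd, and the odd pairs are exactly `(m, n) = (k + l + 1, k - l)`, for which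
`(τ/2)(m² + n²) = τ((k + ½)² + (l + ½)²)` and `xm + yn = (x + y)(k + ½) + (x - y)(l + ½)`:
the surviving terms are those of `-2 θ₂(x + y|τ) θ₂(x - y|τ)`.
-/

/-- Jacobi theta function `θ_a(z|τ)` for `a = 1,2,3,4`. -/
noncomputable def jTheta (a : ℕ) (z τ : ℂ) : ℂ :=
  match a with
  | 1 => -∑' k : ℤ, Complex.exp ((Real.pi : ℂ) * Complex.I * τ * ((k : ℂ) + 1/2)^2
          + 2 * (Real.pi : ℂ) * Complex.I * (z + 1/2) * ((k : ℂ) + 1/2))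
  | 2 => ∑' k : ℤ, Complex.exp ((Real.pi : ℂ) * Complex.I * τ * ((k : ℂ) + 1/2)^2
          + 2 * (Real.pi : ℂ) * Complex.I * z * ((k : ℂ) + 1/2))
  | 3 => ∑' k : ℤ, Complex.exp ((Real.pi : ℂ) * Complex.I * τ * (k : ℂ)^2
          + 2 * (Real.pi : ℂ) * Complex.I * z * (k : ℂ))
  | 4 => ∑' k : ℤ, Complex.exp ((Real.pi : ℂ) * Complex.I * τ * (k : ℂ)^2
          + 2 * (Real.pi : ℂ) * Complex.I * (z + 1/2) * (k : ℂ))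
  | _ => 0

open Complex Real

noncomputable def jThetaTwoTerm (τ z : ℂ) (k : ℤ) : ℂ :=
  cexp (π * I * τ * ((k : ℂ) + 1/2) ^ 2 + 2 * π * I * z * ((k : ℂ) + 1/2))

lemma jTheta_three_eq_jacobiTheta₂ (z τ : ℂ) : jTheta 3 z τ = jacobiTheta₂ z τ :=
  tsum_congr fun n => by
    rw [jacobiTheta₂_term]
    congr 1
    ring

lemma jTheta_four_eq_jacobiTheta₂ (z τ : ℂ) : jTheta 4 z τ = jacobiTheta₂ (z + 1/2) τ :=
  jTheta_three_eq_jacobiTheta₂ (z + 1/2) τ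

lemma jacobiTheta₂_term_add_half (n : ℤ) (z τ : ℂ) :
    jacobiTheta₂_term n (z + 1/2) τ = (-1) ^ n * jacobiTheta₂_term n z τ := by
  rw [jacobiTheta₂_term, jacobiTheta₂_term, ← exp_pi_mul_I, ← exp_int_mul, ← Complex.exp_add]
  congr 1
  ring

lemma jThetaTwoTerm_eq (τ z : ℂ) (k : ℤ) :
    jThetaTwoTerm τ z k = cexp (π * I * τ / 4 + π * I * z) * jacobiTheta₂_term k (z + τ/2) τ := by
  rw [jThetaTwoTerm, jacobiTheta₂_term, ← Complex.exp_add]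
  congr 1
  ring

lemma summable_norm_jacobiTheta₂_term {τ : ℂ} (hτ : 0 < τ.im) (z : ℂ) :
    Summable fun n => ‖jacobiTheta₂_term n z τ‖ :=
  summable_norm_iff.mpr ((summable_jacobiTheta₂_term_iff z τ).mpr hτ)

lemma summable_norm_jThetaTwoTerm {τ : ℂ} (hτ : 0 < τ.im) (z : ℂ) :
    Summable fun k => ‖jThetaTwoTerm τ z k‖ := by
  simp only [jThetaTwoTerm_eq, norm_mul]
  exact (summable_norm_jacobiTheta₂_term hτ _).mul_left _

lemma hasSum_mul_of_summable_norm {R ι κ : Type*} [NormedRing R] [CompleteSpace R] {f : ι → R}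
    {g : κ → R} (hf : Summable fun i => ‖f i‖) (hg : Summable fun j => ‖g j‖) :
    HasSum (fun p : ι × κ => f p.1 * g p.2) ((∑' i, f i) * ∑' j, g j) := by
  rw [tsum_mul_tsum_of_summable_norm hf hg]
  exact (summable_mul_of_summable_norm hf hg).hasSum

lemma hasSum_jacobiTheta₂_mul_jacobiTheta₂ {τ : ℂ} (hτ : 0 < τ.im) (x y : ℂ) :
    HasSum (fun p : ℤ × ℤ => jacobiTheta₂_term p.1 x τ * jacobiTheta₂_term p.2 y τ)
      (jacobiTheta₂ x τ * jacobiTheta₂ y τ) :=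
  hasSum_mul_of_summable_norm (summable_norm_jacobiTheta₂_term hτ x)
    (summable_norm_jacobiTheta₂_term hτ y)

lemma hasSum_jTheta_two_mul_jTheta_two {τ : ℂ} (hτ : 0 < τ.im) (x y : ℂ) :
    HasSum (fun p : ℤ × ℤ => jThetaTwoTerm τ x p.1 * jThetaTwoTerm τ y p.2)
      (jTheta 2 x τ * jTheta 2 y τ) :=
  hasSum_mul_of_summable_norm (summable_norm_jThetaTwoTerm hτ x) (summable_norm_jThetaTwoTerm hτ y)

lemma jacobiTheta₂_term_mul_eq_jThetaTwoTerm_mul (k l : ℤ) (x y τ : ℂ) :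
    jacobiTheta₂_term (k + l + 1) x (τ/2) * jacobiTheta₂_term (k - l) y (τ/2)
      = jThetaTwoTerm τ (x + y) k * jThetaTwoTerm τ (x - y) l := by
  rw [jacobiTheta₂_term, jacobiTheta₂_term, jThetaTwoTerm, jThetaTwoTerm, ← Complex.exp_add,
    ← Complex.exp_add]
  congr 1
  push_cast
  ring

lemma hasSum_odd_pairs_iff {M : Type*} [AddCommMonoid M] [TopologicalSpace M] {F : ℤ × ℤ → M}
    {a : M} (hF : ∀ p : ℤ × ℤ, Even (p.1 + p.2) → F p = 0) :
    HasSum (fun q : ℤ × ℤ => F (q.1 + q.2 + 1, q.1 - q.2)) a ↔ HasSum F a := by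
  refine Function.Injective.hasSum_iff (g := fun q : ℤ × ℤ => (q.1 + q.2 + 1, q.1 - q.2))
    (fun q r h => ?_) fun p hp => hF p ?_
  · simp only [Prod.mk.injEq] at h
    exact Prod.ext (by omega) (by omega)
  · rcases Int.even_or_odd (p.1 + p.2) with h | ⟨t, ht⟩
    · exact h
    · exact absurd ⟨(t, t - p.2), Prod.ext (show t + (t - p.2) + 1 = p.1 by omega)
        (show t - (t - p.2) = p.2 by omega)⟩ hp

lemma hasSum_jTheta_four_mul_sub_jTheta_three_mul {τ : ℂ} (hτ : 0 < τ.im) (x y : ℂ) :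
    HasSum (fun p : ℤ × ℤ => ((-1) ^ (p.1 + p.2) - 1)
        * (jacobiTheta₂_term p.1 x τ * jacobiTheta₂_term p.2 y τ))
      (jTheta 4 x τ * jTheta 4 y τ - jTheta 3 x τ * jTheta 3 y τ) := by
  rw [jTheta_four_eq_jacobiTheta₂, jTheta_four_eq_jacobiTheta₂, jTheta_three_eq_jacobiTheta₂,
    jTheta_three_eq_jacobiTheta₂]
  refine ((hasSum_jacobiTheta₂_mul_jacobiTheta₂ hτ _ _).sub
    (hasSum_jacobiTheta₂_mul_jacobiTheta₂ hτ x y)).congr_fun fun p => ?_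
  rw [jacobiTheta₂_term_add_half, jacobiTheta₂_term_add_half, zpow_add₀ (by norm_num)]
  ring

/-- For all `x, y ∈ ℂ`:
`θ₄(x|τ/2)·θ₄(y|τ/2) − θ₃(x|τ/2)·θ₃(y|τ/2) = −2·θ₂(x+y|τ)·θ₂(x−y|τ)`. -/
theorem theta_half_period_product' (τ : ℂ) (hτ : 0 < τ.im) (x y : ℂ) :
    jTheta 4 x (τ/2) * jTheta 4 y (τ/2) - jTheta 3 x (τ/2) * jTheta 3 y (τ/2)
      = -2 * jTheta 2 (x + y) τ * jTheta 2 (x - y) τ := by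
  have hτ2 : 0 < (τ/2).im := by simpa using hτ
  refine (hasSum_jTheta_four_mul_sub_jTheta_three_mul hτ2 x y).unique
    ((hasSum_odd_pairs_iff fun p hp => ?_).mp ?_)
  · rw [hp.neg_one_zpow, sub_self, zero_mul]
  · rw [mul_assoc]
    refine ((hasSum_jTheta_two_mul_jTheta_two hτ (x + y) (x - y)).mul_left (-2)).congr_fun
      fun q => ?_
    have hodd : Odd (q.1 + q.2 + 1 + (q.1 - q.2)) := ⟨q.1, by ring⟩
    rw [jacobiTheta₂_term_mul_eq_jThetaTwoTerm_mul, hodd.neg_one_zpow]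
    ring
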